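/- Fidelity is jointly concave in its first argument: for density operators ρ₁, ρ₂, σ and q ∈ [0,1], F(q ρ₁ + (1−q) ρ₂, σ) ≥ q F(ρ₁, σ) + (1−q) F(ρ₂, σ). -/

import Mathlib

open Matrix
open scoped ComplexOrder Kronecker

noncomputable section

/-- A density operator: positive semidefinite with unit trace. -/
def IsDensity {d : Type*} [Fintype d] [DecidableEq d] (ρ : Matrix d d ℂ) : Prop :=
  ρ.PosSemidef ∧ ρ.trace = 1

open Classical in
/-- Square root of a positive semidefinite matrix (junk value `0` otherwise). -/
noncomputable def matSqrt {d : Type*} [Fintype d] [DecidableEq d] (A : Matrix d d ℂ) :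
    Matrix d d ℂ :=
  if h : A.PosSemidef then
    h.1.eigenvectorUnitary.1 * diagonal ((↑) ∘ (√·) ∘ h.1.eigenvalues) *
      (star h.1.eigenvectorUnitary : Matrix d d ℂ)
  else 0

/-- Uhlmann fidelity `F(ρ,σ) = (Tr √(√ρ σ √ρ))²`. -/
noncomputable def fid {d : Type*} [Fintype d] [DecidableEq d] (ρ σ : Matrix d d ℂ) : ℝ :=
  ((matSqrt (matSqrt ρ * σ * matSqrt ρ)).trace.re) ^ 2

/-- Bures angle `D(ρ,σ) = arccos √F(ρ,σ)`. -/
noncomputable def bures {d : Type*} [Fintype d] [DecidableEq d] (ρ σ : Matrix d d ℂ) : ℝ :=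
  Real.arccos (Real.sqrt (fid ρ σ))


/-!
The root fidelity `Tr √(√ρ σ √ρ)` is the maximum of `Re Tr (X Yᴴ)` over all `X`, `Y` with
`X Xᴴ ≤ ρ` and `Y Yᴴ ≤ σ`. For the upper bound, Douglas' lemma writes `X = √ρ W₁` and
`Y = √σ W₂` with contractions `Wᵢ`, and Cauchy–Schwarz in an eigenbasis of `√ρ σ √ρ` bounds
`Tr (W₁ W₂ᴴ √σ √ρ)`; the maximum is attained with `Y = √σ`. If `X₁`, `X₂` are optimal for
`ρ₁`, `ρ₂`, the block matrices `[a X₁, b X₂]` and `[α √σ, β √σ]` with `α² + β² ≤ 1` are admissible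
for `a² ρ₁ + b² ρ₂` and `σ`, so `√F(a² ρ₁ + b² ρ₂, σ) ≥ α a √F(ρ₁, σ) + β b √F(ρ₂, σ)`.
Optimising over `(α, β)` and taking `a = √q`, `b = √(1 - q)` gives the concavity of `F` itself.
-/

open scoped MatrixOrder

section CFC

variable {n 𝕜 : Type*} [Fintype n] [DecidableEq n] [RCLike 𝕜] {S : Matrix n n 𝕜}

lemma mul_cfc_inv_mul_self (hS : IsSelfAdjoint S) : S * cfc (·⁻¹ : ℝ → ℝ) S * S = S := by
  have hc (f : ℝ → ℝ) : ContinuousOn f (spectrum ℝ S) := finite_real_spectrum.continuousOn f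
  calc S * cfc (·⁻¹ : ℝ → ℝ) S * S = cfc (fun x : ℝ => x * x⁻¹ * x) S := by
        rw [cfc_mul _ _ _ (hc _) (hc _), cfc_mul _ _ _ (hc _) (hc _), cfc_id' ℝ S]
    _ = S := by simp only [mul_inv_mul_cancel, cfc_id' ℝ S]

lemma cfc_inv_mul_mul_self_mul_cfc_inv_le_one (hS : IsSelfAdjoint S) :
    cfc (·⁻¹ : ℝ → ℝ) S * (S * S) * cfc (·⁻¹ : ℝ → ℝ) S ≤ 1 := by
  have hc (f : ℝ → ℝ) : ContinuousOn f (spectrum ℝ S) := finite_real_spectrum.continuousOn f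
  calc cfc (·⁻¹ : ℝ → ℝ) S * (S * S) * cfc (·⁻¹ : ℝ → ℝ) S
        = cfc (fun x : ℝ => x⁻¹ * (x * x) * x⁻¹) S := by
        rw [cfc_mul _ _ _ (hc _) (hc _), cfc_mul _ _ _ (hc _) (hc _),
          cfc_mul _ _ _ (hc _) (hc _), cfc_id' ℝ S]
    _ ≤ 1 := cfc_le_one _ _ fun x _ => by
        rcases eq_or_ne x 0 with rfl | hx
        · simp
        · simp [hx]

/-- Douglas' factorization lemma. The factor is `W = S⁺ X`, where `S⁺ = cfc (·⁻¹) S` is the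
Moore–Penrose inverse of `S`. -/
lemma exists_mul_eq_of_mul_conjTranspose_le {m : Type*} [Fintype m] (hS : IsSelfAdjoint S)
    {X : Matrix n m 𝕜} (hX : X * Xᴴ ≤ S * S) : ∃ W : Matrix n m 𝕜, S * W = X ∧ W * Wᴴ ≤ 1 := by
  set P := cfc (·⁻¹ : ℝ → ℝ) S
  have hP : IsSelfAdjoint P := cfc_predicate _ _
  refine ⟨P * X, ?_, ?_⟩
  · set E := 1 - S * P
    have hES : E * S = 0 := by rw [sub_mul, one_mul, mul_cfc_inv_mul_self hS, sub_self]
    have hEX : E * X * (E * X)ᴴ ≤ 0 :=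
      calc E * X * (E * X)ᴴ = E * (X * Xᴴ) * star E := by
            rw [conjTranspose_mul, star_eq_conjTranspose]; simp only [Matrix.mul_assoc]
        _ ≤ E * (S * S) * star E := star_right_conjugate_le_conjugate hX E
        _ = 0 := by rw [← mul_assoc, hES, zero_mul, zero_mul]
    have hEX0 : E * X = 0 := self_mul_conjTranspose_eq_zero.mp <|
      le_antisymm hEX (nonneg_iff_posSemidef.mpr (posSemidef_self_mul_conjTranspose _))
    rw [Matrix.sub_mul, Matrix.one_mul, sub_eq_zero] at hEX0
    rw [← Matrix.mul_assoc, ← hEX0]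
  · calc P * X * (P * X)ᴴ = P * (X * Xᴴ) * P := by
          rw [conjTranspose_mul, ← star_eq_conjTranspose P, hP.star_eq]
          simp only [Matrix.mul_assoc]
      _ ≤ P * (S * S) * P := hP.conjugate_le_conjugate hX
      _ ≤ 1 := cfc_inv_mul_mul_self_mul_cfc_inv_le_one hS

end CFC

lemma re_diag_le_of_le {n 𝕜 : Type*} [RCLike 𝕜] {M N : Matrix n n 𝕜} (h : M ≤ N) (j : n) :
    RCLike.re (M j j) ≤ RCLike.re (N j j) := by
  have := (le_iff.mp h).diag_nonneg (i := j)
  rw [Matrix.sub_apply, RCLike.nonneg_iff] at this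
  simpa using this.1

lemma re_diag_conjTranspose_mul_le {n m 𝕜 : Type*} [Fintype n] [DecidableEq n] [Fintype m]
    [RCLike 𝕜] {W : Matrix n m 𝕜} (hW : W * Wᴴ ≤ 1) (M : Matrix n n 𝕜) (j : n) :
    RCLike.re (((Wᴴ * M)ᴴ * (Wᴴ * M)) j j) ≤ RCLike.re ((Mᴴ * M) j j) := by
  refine re_diag_le_of_le ?_ j
  simpa only [Matrix.mul_one, star_eq_conjTranspose, conjTranspose_mul,
    conjTranspose_conjTranspose, Matrix.mul_assoc] using star_left_conjugate_le_conjugate hW M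

lemma re_trace_conjTranspose_mul_le {m n 𝕜 : Type*} [Fintype m] [Fintype n] [RCLike 𝕜]
    (P Q : Matrix m n 𝕜) :
    RCLike.re (Pᴴ * Q).trace ≤
      ∑ j, √(RCLike.re ((Pᴴ * P) j j)) * √(RCLike.re ((Qᴴ * Q) j j)) := by
  rw [trace, map_sum]
  gcongr with j
  rw [diag_apply, ← inner_matrix_col_col, ← inner_matrix_col_col, ← inner_matrix_col_col,
    ← norm_eq_sqrt_re_inner, ← norm_eq_sqrt_re_inner]
  exact re_inner_le_norm _ _

lemma fromCols_mul_conjTranspose_fromCols {R m n₁ n₂ : Type*} [Fintype n₁] [Fintype n₂]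
    [Semiring R] [StarRing R] (A₁ B₁ : Matrix m n₁ R) (A₂ B₂ : Matrix m n₂ R) :
    fromCols A₁ A₂ * (fromCols B₁ B₂)ᴴ = A₁ * B₁ᴴ + A₂ * B₂ᴴ := by
  rw [conjTranspose_fromCols_eq_fromRows_conjTranspose, fromCols_mul_fromRows]

lemma smul_mul_conjTranspose_smul {l m : Type*} [Fintype m] (a b : ℝ) (A B : Matrix l m ℂ) :
    a • A * (b • B)ᴴ = (a * b) • (A * Bᴴ) := by
  rw [conjTranspose_smul, star_trivial, Matrix.smul_mul, Matrix.mul_smul, smul_smul]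

section Fidelity

variable {d : Type*} [Fintype d] [DecidableEq d]

lemma matSqrt_eq_sqrt {A : Matrix d d ℂ} (hA : 0 ≤ A) : matSqrt A = CFC.sqrt A := by
  rw [CFC.sqrt_eq_real_sqrt A, cfcₙ_eq_cfc, matSqrt, dif_pos (nonneg_iff_posSemidef.mp hA),
    (nonneg_iff_posSemidef.mp hA).1.cfc_eq, IsHermitian.cfc, Unitary.conjStarAlgAut_apply]
  rfl

lemma trace_matSqrt {H : Matrix d d ℂ} (hH : H.PosSemidef) :
    (matSqrt H).trace = ∑ j, (√(hH.1.eigenvalues j) : ℂ) := by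
  rw [matSqrt, dif_pos hH, trace_mul_cycle, Unitary.coe_star_mul_self, Matrix.one_mul,
    trace_diagonal]
  rfl

lemma re_trace_mul_conjTranspose_mul_le {m : Type*} [Fintype m] {W₁ W₂ : Matrix d m ℂ}
    (h₁ : W₁ * W₁ᴴ ≤ 1) (h₂ : W₂ * W₂ᴴ ≤ 1) (A : Matrix d d ℂ) :
    (W₁ * W₂ᴴ * A).trace.re ≤ (matSqrt (Aᴴ * A)).trace.re := by
  have hH : (Aᴴ * A).PosSemidef := posSemidef_conjTranspose_mul_self A
  set U : Matrix d d ℂ := hH.1.eigenvectorUnitary.1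
  have hUU : star U * U = 1 := Unitary.coe_star_mul_self _
  have hUU' : U * star U = 1 := Unitary.coe_mul_star_self _
  have hdiag : star U * (Aᴴ * A) * U = diagonal ((↑) ∘ hH.1.eigenvalues) := by
    simpa [Unitary.conjStarAlgAut_star_apply] using hH.1.conjStarAlgAut_star_eigenvectorUnitary
  have htr : (W₁ * W₂ᴴ * A).trace = ((W₁ᴴ * U)ᴴ * (W₂ᴴ * A * U)).trace := by
    rw [conjTranspose_mul, conjTranspose_conjTranspose, ← star_eq_conjTranspose,
      show star U * W₁ * (W₂ᴴ * A * U) = star U * (W₁ * W₂ᴴ * A) * U by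
        simp only [Matrix.mul_assoc],
      trace_mul_cycle (star U), hUU', Matrix.one_mul]
  have hW₁ (j : d) : (((W₁ᴴ * U)ᴴ * (W₁ᴴ * U)) j j).re ≤ 1 := by
    simpa [← star_eq_conjTranspose, hUU] using re_diag_conjTranspose_mul_le h₁ U j
  have hW₂ (j : d) : (((W₂ᴴ * A * U)ᴴ * (W₂ᴴ * A * U)) j j).re ≤ hH.1.eigenvalues j := by
    have hAU : (A * U)ᴴ * (A * U) = star U * (Aᴴ * A) * U := by
      rw [conjTranspose_mul, ← star_eq_conjTranspose U]; simp only [Matrix.mul_assoc]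
    have := re_diag_conjTranspose_mul_le h₂ (A * U) j
    rw [hAU, hdiag, ← Matrix.mul_assoc W₂ᴴ A U] at this
    simpa using this
  rw [htr, trace_matSqrt hH, Complex.re_sum]
  calc ((W₁ᴴ * U)ᴴ * (W₂ᴴ * A * U)).trace.re
      ≤ ∑ j, √(((W₁ᴴ * U)ᴴ * (W₁ᴴ * U)) j j).re *
          √(((W₂ᴴ * A * U)ᴴ * (W₂ᴴ * A * U)) j j).re :=
        re_trace_conjTranspose_mul_le (W₁ᴴ * U) (W₂ᴴ * A * U)
    _ ≤ ∑ j, √1 * √(hH.1.eigenvalues j) := by gcongr with j; exacts [hW₁ j, hW₂ j]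
    _ = _ := by simp

/-- The root fidelity `√F(ρ, σ)`. -/
def sqrtFid (ρ σ : Matrix d d ℂ) : ℝ := (matSqrt (matSqrt ρ * σ * matSqrt ρ)).trace.re

lemma fid_eq_sqrtFid_sq (ρ σ : Matrix d d ℂ) : fid ρ σ = sqrtFid ρ σ ^ 2 := rfl

lemma re_trace_mul_conjTranspose_le_sqrtFid {m : Type*} [Fintype m] {ρ σ : Matrix d d ℂ}
    {X Y : Matrix d m ℂ} (hX : X * Xᴴ ≤ ρ) (hY : Y * Yᴴ ≤ σ) :
    (X * Yᴴ).trace.re ≤ sqrtFid ρ σ := by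
  have hρ : 0 ≤ ρ := (nonneg_iff_posSemidef.mpr (posSemidef_self_mul_conjTranspose X)).trans hX
  have hσ : 0 ≤ σ := (nonneg_iff_posSemidef.mpr (posSemidef_self_mul_conjTranspose Y)).trans hY
  rw [sqrtFid, matSqrt_eq_sqrt hρ]
  set r := CFC.sqrt ρ
  set s := CFC.sqrt σ
  have hr : IsSelfAdjoint r := (CFC.sqrt_nonneg ρ).isSelfAdjoint
  have hs : IsSelfAdjoint s := (CFC.sqrt_nonneg σ).isSelfAdjoint
  obtain ⟨W₁, rfl, hW₁⟩ :=
    exists_mul_eq_of_mul_conjTranspose_le hr (hX.trans (CFC.sqrt_mul_sqrt_self ρ).ge)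
  obtain ⟨W₂, rfl, hW₂⟩ :=
    exists_mul_eq_of_mul_conjTranspose_le hs (hY.trans (CFC.sqrt_mul_sqrt_self σ).ge)
  have hH : r * σ * r = (s * r)ᴴ * (s * r) := by
    rw [conjTranspose_mul, ← star_eq_conjTranspose, ← star_eq_conjTranspose, hr.star_eq,
      hs.star_eq, Matrix.mul_assoc r s, ← Matrix.mul_assoc s, CFC.sqrt_mul_sqrt_self σ,
      Matrix.mul_assoc]
  have htr : (r * W₁ * (s * W₂)ᴴ).trace = (W₁ * W₂ᴴ * (s * r)).trace := by
    rw [conjTranspose_mul, ← star_eq_conjTranspose s, hs.star_eq,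
      show r * W₁ * (W₂ᴴ * s) = r * (W₁ * W₂ᴴ * s) by simp only [Matrix.mul_assoc],
      trace_mul_comm, Matrix.mul_assoc]
  rw [hH, htr]
  exact re_trace_mul_conjTranspose_mul_le hW₁ hW₂ _

lemma exists_mul_conjTranspose_le_and_re_trace_eq_sqrtFid {ρ σ : Matrix d d ℂ} (hρ : 0 ≤ ρ)
    (hσ : 0 ≤ σ) : ∃ X : Matrix d d ℂ, X * Xᴴ ≤ ρ ∧ (X * matSqrt σ).trace.re = sqrtFid ρ σ := by
  rw [sqrtFid, matSqrt_eq_sqrt hρ, matSqrt_eq_sqrt hσ]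
  set r := CFC.sqrt ρ
  set s := CFC.sqrt σ
  have hr : IsSelfAdjoint r := (CFC.sqrt_nonneg ρ).isSelfAdjoint
  have hs : IsSelfAdjoint s := (CFC.sqrt_nonneg σ).isSelfAdjoint
  have hss : s * s = σ := CFC.sqrt_mul_sqrt_self σ
  have hH : 0 ≤ r * σ * r := hr.conjugate_nonneg hσ
  rw [matSqrt_eq_sqrt hH]
  set T := CFC.sqrt (r * σ * r)
  have hT : IsSelfAdjoint T := (CFC.sqrt_nonneg _).isSelfAdjoint
  have hTT : T * T = r * σ * r := CFC.sqrt_mul_sqrt_self _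
  set P := cfc (·⁻¹ : ℝ → ℝ) T
  have hP : IsSelfAdjoint P := cfc_predicate _ _
  -- `X = r Vᴴ`, where `s r = V T` is the polar decomposition, with `V = s r P`
  refine ⟨r * P * r * s, ?_, congrArg Complex.re ?_⟩
  · calc r * P * r * s * (r * P * r * s)ᴴ = r * (P * (T * T) * P) * r := by
          rw [hTT, ← hss]
          simp only [← star_eq_conjTranspose, star_mul, hr.star_eq, hs.star_eq, hP.star_eq,
            Matrix.mul_assoc]
      _ ≤ r * 1 * r := hr.conjugate_le_conjugate (cfc_inv_mul_mul_self_mul_cfc_inv_le_one hT)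
      _ = ρ := by rw [Matrix.mul_one, CFC.sqrt_mul_sqrt_self ρ]
  · calc (r * P * r * s * s).trace = (r * (P * r * σ)).trace := by
          rw [Matrix.mul_assoc _ s s, hss]; simp only [Matrix.mul_assoc]
      _ = (P * (T * T)).trace := by rw [trace_mul_comm, hTT]; simp only [Matrix.mul_assoc]
      _ = (T * P * T).trace := by rw [← Matrix.mul_assoc, trace_mul_cycle]
      _ = T.trace := by rw [mul_cfc_inv_mul_self hT]

lemma mul_sqrtFid_add_mul_sqrtFid_le {ρ₁ ρ₂ σ : Matrix d d ℂ} (hρ₁ : 0 ≤ ρ₁) (hρ₂ : 0 ≤ ρ₂)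
    (hσ : 0 ≤ σ) (a b : ℝ) {α β : ℝ} (hαβ : α ^ 2 + β ^ 2 ≤ 1) :
    α * (a * sqrtFid ρ₁ σ) + β * (b * sqrtFid ρ₂ σ) ≤ sqrtFid (a ^ 2 • ρ₁ + b ^ 2 • ρ₂) σ := by
  obtain ⟨X₁, hX₁, htr₁⟩ := exists_mul_conjTranspose_le_and_re_trace_eq_sqrtFid hρ₁ hσ
  obtain ⟨X₂, hX₂, htr₂⟩ := exists_mul_conjTranspose_le_and_re_trace_eq_sqrtFid hρ₂ hσ
  rw [matSqrt_eq_sqrt hσ] at htr₁ htr₂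
  set s := CFC.sqrt σ
  have hs : sᴴ = s := (CFC.sqrt_nonneg σ).isSelfAdjoint
  have hss : s * sᴴ = σ := by rw [hs]; exact CFC.sqrt_mul_sqrt_self σ
  set X := fromCols (a • X₁) (b • X₂)
  set Y := fromCols (α • s) (β • s)
  have hX : X * Xᴴ ≤ a ^ 2 • ρ₁ + b ^ 2 • ρ₂ := by
    rw [fromCols_mul_conjTranspose_fromCols, smul_mul_conjTranspose_smul,
      smul_mul_conjTranspose_smul, ← sq, ← sq]
    gcongr
  have hY : Y * Yᴴ ≤ σ := by
    rw [fromCols_mul_conjTranspose_fromCols, smul_mul_conjTranspose_smul,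
      smul_mul_conjTranspose_smul, ← sq, ← sq, ← add_smul, hss]
    exact smul_le_of_le_one_left hσ hαβ
  have htr : (X * Yᴴ).trace.re = α * (a * sqrtFid ρ₁ σ) + β * (b * sqrtFid ρ₂ σ) := by
    rw [fromCols_mul_conjTranspose_fromCols, smul_mul_conjTranspose_smul,
      smul_mul_conjTranspose_smul, hs, trace_add, trace_smul, trace_smul, Complex.add_re,
      Complex.smul_re, Complex.smul_re, htr₁, htr₂]
    ring
  rw [← htr]
  exact re_trace_mul_conjTranspose_le_sqrtFid hX hY

end Fidelity

lemma sq_add_sq_le_sq_of_forall {a b c : ℝ}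
    (h : ∀ α β : ℝ, α ^ 2 + β ^ 2 ≤ 1 → α * a + β * b ≤ c) : a ^ 2 + b ^ 2 ≤ c ^ 2 := by
  rcases (add_nonneg (sq_nonneg a) (sq_nonneg b)).eq_or_lt with h0 | hpos
  · rw [← h0]; positivity
  set N := √(a ^ 2 + b ^ 2)
  have hN : 0 < N := Real.sqrt_pos.mpr hpos
  have hN2 : N ^ 2 = a ^ 2 + b ^ 2 := Real.sq_sqrt hpos.le
  have hNc : N ≤ c := by
    refine le_of_eq_of_le ?_ (h (a / N) (b / N) ?_)
    · field_simp; linarith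
    · rw [div_pow, div_pow, ← add_div, ← hN2, div_self (by positivity)]
  rw [← hN2]
  exact pow_le_pow_left₀ hN.le hNc 2

/-- Fidelity is concave in its first argument. -/
theorem fid_concave_fst {d : Type*} [Fintype d] [DecidableEq d]
    (ρ₁ ρ₂ σ : Matrix d d ℂ) (hρ₁ : IsDensity ρ₁) (hρ₂ : IsDensity ρ₂) (hσ : IsDensity σ)
    (q : ℝ) (hq0 : 0 ≤ q) (hq1 : q ≤ 1) :
    q * fid ρ₁ σ + (1 - q) * fid ρ₂ σ ≤ fid (q • ρ₁ + (1 - q) • ρ₂) σ := by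
  have hq : 0 ≤ 1 - q := sub_nonneg.mpr hq1
  have key := sq_add_sq_le_sq_of_forall fun α β hαβ =>
    mul_sqrtFid_add_mul_sqrtFid_le (nonneg_iff_posSemidef.mpr hρ₁.1)
      (nonneg_iff_posSemidef.mpr hρ₂.1) (nonneg_iff_posSemidef.mpr hσ.1) √q √(1 - q) hαβ
  rwa [mul_pow, mul_pow, Real.sq_sqrt hq0, Real.sq_sqrt hq, ← fid_eq_sqrtFid_sq,
    ← fid_eq_sqrtFid_sq, ← fid_eq_sqrtFid_sq] at key
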